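/- Let (R_i, t_i) be a perfectoid tower arising from (R_0, I_0). Then for every j ≥ 0 there is a bijection ψ_j : (R_j^{s♭})_{I_0^{s♭}R_j^{s♭}-tor} → (R_j)_{I_0R_j-tor} which is additive and multiplicative, and these bijections are compatible with the transition maps: for every j and every torsion element x, ψ_{j+1}(t_j^{s♭}(x)) = t_j(ψ_j(x)). -/

import Mathlib

set_option synthInstance.maxHeartbeats 1000000
set_option maxHeartbeats 1000000
universe u

namespace PaperTower

variable {R : ℕ → Type u} [∀ i, CommRing (R i)]

/-- The set of `J`-torsion elements of a commutative ring. -/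
def torSet {A : Type*} [CommRing A] (J : Ideal A) : Set A :=
  {x | ∀ a ∈ J, ∃ n : ℕ, 0 < n ∧ a ^ n * x = 0}

/-- Cast ring homomorphism between quotients at equal indices. -/
def qcast (I : ∀ i, Ideal (R i)) {m n : ℕ} (h : m = n) :
    (R m ⧸ I m) →+* (R n ⧸ I n) := by subst h; exact RingHom.id _

/-- The `j`-th small tilt (inverse quasi-perfection) of a tower, as a subring of the
product of the quotients, consisting of sequences compatible with the Frobenius
projections `F`. -/
def Tilt (I : ∀ i, Ideal (R i))
    (F : ∀ i, (R (i + 1) ⧸ I (i + 1)) →+* (R i ⧸ I i)) (j : ℕ) :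
    Subring (∀ i, R (j + i) ⧸ I (j + i)) where
  carrier := {a | ∀ i, F (j + i) (a (i + 1)) = a i}
  zero_mem' := by
    intro i
    show F (j + i) 0 = 0
    simp
  one_mem' := by
    intro i
    show F (j + i) 1 = 1
    simp
  add_mem' := by
    intro a b ha hb i
    show F (j + i) (a (i + 1) + b (i + 1)) = a i + b i
    rw [map_add, ha i, hb i]
  mul_mem' := by
    intro a b ha hb i
    show F (j + i) (a (i + 1) * b (i + 1)) = a i * b i
    rw [map_mul, ha i, hb i]
  neg_mem' := by
    intro a ha i
    show F (j + i) (-(a (i + 1))) = -(a i)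
    rw [map_neg, ha i]

/-- The `m`-th projection `Φ^{(j)}_m` from the `j`-th small tilt. -/
def proj (I : ∀ i, Ideal (R i))
    (F : ∀ i, (R (i + 1) ⧸ I (i + 1)) →+* (R i ⧸ I i)) (j m : ℕ) :
    Tilt I F j →+* (R (j + m) ⧸ I (j + m)) :=
  (Pi.evalRingHom _ m).comp (Tilt I F j).subtype

/-- Cast ring homomorphism between the rings of the tower at equal indices. -/
def rcast {m n : ℕ} (h : m = n) : R m →+* R n := by subst h; exact RingHom.id _

lemma qcast_mk (I : ∀ i, Ideal (R i)) {m n : ℕ} (h : m = n) (x : R m) :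
    qcast I h (Ideal.Quotient.mk (I m) x) = Ideal.Quotient.mk (I n) (rcast (R := R) h x) := by
  subst h; rfl

lemma torSet_zero {A : Type*} [CommRing A] (J : Ideal A) : (0 : A) ∈ torSet J :=
  fun _ _ => ⟨1, one_pos, by rw [pow_one, mul_zero]⟩

lemma torSet_mul {A : Type*} [CommRing A] {J : Ideal A} {x : A} (hx : x ∈ torSet J) (c : A) :
    c * x ∈ torSet J := by
  intro a ha
  obtain ⟨n, hn, h⟩ := hx a ha
  exact ⟨n, hn, by rw [show a ^ n * (c * x) = c * (a ^ n * x) by ring, h, mul_zero]⟩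

lemma torSet_add {A : Type*} [CommRing A] {J : Ideal A}
    (hz : ∀ a ∈ J, ∀ x ∈ torSet J, a * x = 0) {x y : A}
    (hx : x ∈ torSet J) (hy : y ∈ torSet J) : x + y ∈ torSet J :=
  fun a ha => ⟨1, one_pos, by rw [pow_one, mul_add, hz a ha x hx, hz a ha y hy, add_zero]⟩

lemma tor_inter {A : Type*} [CommRing A] {J : Ideal A} (hprin : J.IsPrincipal)
    (hz : ∀ a ∈ J, ∀ x ∈ torSet J, a * x = 0) {x : A} (hx : x ∈ torSet J) (hxJ : x ∈ J) :
    x = 0 := by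
  obtain ⟨⟨f, hf⟩⟩ := hprin
  have hfJ : f ∈ J := by rw [hf]; exact Ideal.subset_span (Set.mem_singleton f)
  have hxJ' : x ∈ Ideal.span {f} := by rwa [hf] at hxJ
  obtain ⟨u, hu⟩ := Ideal.mem_span_singleton'.mp hxJ'
  have hfx : f * x = 0 := hz f hfJ x hx
  have h2 : f * (u * f) = 0 := by rw [hu]; exact hfx
  have hu_tor : u ∈ torSet J := by
    intro a ha
    have ha' : a ∈ Ideal.span {f} := by rwa [hf] at ha
    obtain ⟨c, hc⟩ := Ideal.mem_span_singleton'.mp ha'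
    refine ⟨2, by norm_num, ?_⟩
    calc a ^ 2 * u = c ^ 2 * (f * (u * f)) := by rw [← hc]; ring
    _ = 0 := by rw [h2, mul_zero]
  have hfu : f * u = 0 := hz f hfJ u hu_tor
  rw [← hu, mul_comm]
  exact hfu

lemma tor_unique {A : Type*} [CommRing A] {J : Ideal A} (hprin : J.IsPrincipal)
    (hz : ∀ a ∈ J, ∀ x ∈ torSet J, a * x = 0) {x y : A}
    (hx : x ∈ torSet J) (hy : y ∈ torSet J)
    (h : Ideal.Quotient.mk J x = Ideal.Quotient.mk J y) : x = y := by
  have hsub : x - y ∈ torSet J := fun a ha =>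
    ⟨1, one_pos, by rw [pow_one, mul_sub, hz a ha x hx, hz a ha y hy, sub_zero]⟩
  have hmem : x - y ∈ J := Ideal.Quotient.eq.mp h
  exact sub_eq_zero.mp (tor_inter hprin hz hsub hmem)

/-- For a perfectoid tower, there are additive and multiplicative
bijections `ψ_j : (R_j^{s♭})_{I₀^{s♭}R_j^{s♭}-tor} → (R_j)_{I₀R_j-tor}` compatible with
the transition maps `t_j^{s♭}` and `t_j`. -/
theorem stmt15 (p : ℕ) (hp : p.Prime)
    (R : ℕ → Type u) [∀ i, CommRing (R i)]
    (t : ∀ i, R i →+* R (i + 1))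
    (I : ∀ i, Ideal (R i))
    (hpI : (p : R 0) ∈ I 0)
    (hIsucc : ∀ i, I (i + 1) = (I i).map (t i))
    (tbar : ∀ i, (R i ⧸ I i) →+* (R (i + 1) ⧸ I (i + 1)))
    (htbar : ∀ i (x : R i),
      tbar i (Ideal.Quotient.mk (I i) x) = Ideal.Quotient.mk (I (i + 1)) (t i x))
    (htbarInj : ∀ i, Function.Injective (tbar i))
    (F : ∀ i, (R (i + 1) ⧸ I (i + 1)) →+* (R i ⧸ I i))
    (hF : ∀ i (x : R (i + 1) ⧸ I (i + 1)), tbar i (F i x) = x ^ p)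
    (hFsurj : ∀ i, Function.Surjective (F i))
    (hJac : ∀ i, I i ≤ (⊥ : Ideal (R i)).jacobson)
    (hI0prin : (I 0).IsPrincipal)
    (I1e : ∀ i, Ideal (R (i + 1)))
    (hI1prin : (I1e 0).IsPrincipal)
    (hI1pow : I1e 0 ^ p = I 1)
    (hI1es : ∀ i, I1e (i + 1) = (I1e i).map (t (i + 1)))
    (hkerF : ∀ i, RingHom.ker (F i) = (I1e i).map (Ideal.Quotient.mk (I (i + 1))))
    (htorz : ∀ i, ∀ a ∈ I i, ∀ x ∈ torSet (I i), a * x = 0)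
    (hFtor : ∀ i, ∃ G : torSet (I (i + 1)) → torSet (I i), Function.Bijective G ∧
      ∀ x : torSet (I (i + 1)),
        Ideal.Quotient.mk (I i) (G x : R i) = F i (Ideal.Quotient.mk (I (i + 1)) (x : R (i + 1))))
    (ts : ∀ j, Tilt I F j →+* Tilt I F (j + 1))
    (hts : ∀ (j : ℕ) (a : Tilt I F j) (i : ℕ),
      (ts j a).1 i = qcast I (by omega : (j + i) + 1 = (j + 1) + i) (tbar (j + i) (a.1 i)))
    (tsc : ∀ j, Tilt I F 0 →+* Tilt I F j)
    (htsc0 : tsc 0 = RingHom.id _)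
    (htscS : ∀ j, tsc (j + 1) = (ts j).comp (tsc j))
    :
    ∃ ψ : ∀ j, torSet ((RingHom.ker (proj I F 0 0)).map (tsc j)) → torSet (I j),
      (∀ j, Function.Bijective (ψ j)) ∧
      (∀ (j : ℕ) (x y : torSet ((RingHom.ker (proj I F 0 0)).map (tsc j)))
        (h : (x : Tilt I F j) + (y : Tilt I F j)
            ∈ torSet ((RingHom.ker (proj I F 0 0)).map (tsc j))),
        (ψ j ⟨(x : Tilt I F j) + (y : Tilt I F j), h⟩ : R j) = (ψ j x : R j) + (ψ j y : R j)) ∧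
      (∀ (j : ℕ) (x y : torSet ((RingHom.ker (proj I F 0 0)).map (tsc j)))
        (h : (x : Tilt I F j) * (y : Tilt I F j)
            ∈ torSet ((RingHom.ker (proj I F 0 0)).map (tsc j))),
        (ψ j ⟨(x : Tilt I F j) * (y : Tilt I F j), h⟩ : R j) = (ψ j x : R j) * (ψ j y : R j)) ∧
      (∀ (j : ℕ) (x : torSet ((RingHom.ker (proj I F 0 0)).map (tsc j)))
        (h : ts j (x : Tilt I F j) ∈ torSet ((RingHom.ker (proj I F 0 0)).map (tsc (j + 1)))),
        (ψ (j + 1) ⟨ts j (x : Tilt I F j), h⟩ : R (j + 1)) = t j (ψ j x : R j)) := by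
  classical
  -- generator of I1e 0
  obtain ⟨⟨g0, hg0⟩⟩ := hI1prin
  -- the sequence of generators
  obtain ⟨γ, hγ0, hγs⟩ : ∃ γ : ∀ m, R (m + 1), γ 0 = g0 ∧ ∀ m, γ (m + 1) = t (m + 1) (γ m) :=
    ⟨fun m => Nat.rec g0 (fun m g => t (m + 1) g) m, rfl, fun _ => rfl⟩
  have hγspan : ∀ m, I1e m = Ideal.span {γ m} := by
    intro m
    induction m with
    | zero => rw [hγ0]; exact hg0
    | succ m ih =>
      rw [hI1es m, ih, Ideal.map_span, Set.image_singleton, hγs m]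
  have hIpow : ∀ m, I (m + 1) = I1e m ^ p := by
    intro m
    induction m with
    | zero => exact hI1pow.symm
    | succ m ih => rw [hIsucc (m + 1), ih, Ideal.map_pow, ← hI1es m]
  have hIγ : ∀ m, I (m + 1) = Ideal.span {γ m ^ p} := by
    intro m
    rw [hIpow m, hγspan m, Ideal.span_singleton_pow]
  have hprinI : ∀ m, (I m).IsPrincipal := by
    intro m
    cases m with
    | zero => exact hI0prin
    | succ m => exact ⟨⟨γ m ^ p, hIγ m⟩⟩
  -- uniqueness of torsion lifts
  have uniq : ∀ m : ℕ, ∀ {y z : R m}, y ∈ torSet (I m) → z ∈ torSet (I m) →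
      Ideal.Quotient.mk (I m) y = Ideal.Quotient.mk (I m) z → y = z := by
    intro m y z hy hz h
    exact tor_unique (hprinI m) (htorz m) hy hz h
  -- F kills the class of γ
  have hFγ : ∀ m, F m (Ideal.Quotient.mk (I (m + 1)) (γ m)) = 0 := by
    intro m
    apply htbarInj m
    rw [hF, map_zero, ← map_pow, Ideal.Quotient.eq_zero_iff_mem, hIγ m]
    exact Ideal.subset_span (Set.mem_singleton _)
  -- the special element of the tilt at level 0
  obtain ⟨sa, hsa0, hsas⟩ : ∃ sa : ∀ i, R ((0 + i) + 1) ⧸ I ((0 + i) + 1),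
      sa 0 = Ideal.Quotient.mk (I (0 + 0 + 1)) (γ 0) ∧
      ∀ i, F ((0 + i) + 1) (sa (i + 1)) = sa i :=
    ⟨fun i => Nat.rec (motive := fun i => R ((0 + i) + 1) ⧸ I ((0 + i) + 1))
        (Ideal.Quotient.mk (I (0 + 0 + 1)) (γ 0))
        (fun i ih => (hFsurj ((0 + i) + 1) ih).choose) i,
      rfl, fun i => (hFsurj ((0 + i) + 1) _).choose_spec⟩
  obtain ⟨sf, hsf0, hsfs⟩ : ∃ sf : ∀ i, R (0 + i) ⧸ I (0 + i),
      sf 0 = 0 ∧ ∀ i, sf (i + 1) = sa i :=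
    ⟨fun i => match i with | 0 => 0 | (i + 1) => sa i, rfl, fun _ => rfl⟩
  have hsmem : ∀ i, F (0 + i) (sf (i + 1)) = sf i := by
    intro i
    cases i with
    | zero =>
      rw [hsf0, hsfs 0, hsa0]
      exact hFγ 0
    | succ i =>
      rw [hsfs (i + 1), hsfs i]
      exact hsas i
  set sElemT : Tilt I F 0 := ⟨sf, hsmem⟩ with hsElemT
  have hsf1' : sElemT.1 1 = Ideal.Quotient.mk (I (0 + 1)) (γ 0) := by
    show sf 1 = _
    rw [hsfs 0, hsa0]
  -- power identity at level 0
  have hspow0 : ∀ i, sElemT.1 (i + 1) ^ p ^ i = Ideal.Quotient.mk (I (0 + (i + 1))) (γ (0 + i)) := by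
    intro i
    induction i with
    | zero => rw [pow_zero, pow_one]; exact hsf1'
    | succ i ih =>
      have hFs : F (0 + (i + 1)) (sElemT.1 (i + 2)) = sElemT.1 (i + 1) := sElemT.2 (i + 1)
      have htb : sElemT.1 (i + 2) ^ p = tbar (0 + (i + 1)) (sElemT.1 (i + 1)) := by
        rw [← hFs, hF]
      calc sElemT.1 (i + 2) ^ p ^ (i + 1)
          = (sElemT.1 (i + 2) ^ p) ^ p ^ i := by rw [pow_succ', pow_mul]
        _ = tbar (0 + (i + 1)) (sElemT.1 (i + 1)) ^ p ^ i := by rw [htb]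
        _ = tbar (0 + (i + 1)) (sElemT.1 (i + 1) ^ p ^ i) := by rw [map_pow]
        _ = tbar (0 + (i + 1)) (Ideal.Quotient.mk (I (0 + (i + 1))) (γ (0 + i))) := by rw [ih]
        _ = Ideal.Quotient.mk _ (t (0 + (i + 1)) (γ (0 + i))) := htbar (0 + (i + 1)) (γ (0 + i))
        _ = Ideal.Quotient.mk _ (γ (0 + (i + 1))) := congrArg _ (hγs (0 + i)).symm
  -- transported power identity
  have hrγ : ∀ m n (hmn : m = n) (h : m + 1 = n + 1), rcast (R := R) h (γ m) = γ n := by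
    intro m n hmn h
    subst hmn
    rfl
  have hspow : ∀ jj i, (tsc jj sElemT).1 (i + 1) ^ p ^ i
      = Ideal.Quotient.mk (I (jj + (i + 1))) (γ (jj + i)) := by
    intro jj
    induction jj with
    | zero =>
      intro i
      rw [htsc0]
      exact hspow0 i
    | succ jj ih =>
      intro i
      rw [htscS jj, RingHom.comp_apply, hts jj (tsc jj sElemT) (i + 1), ← map_pow, ← map_pow,
        ih i, htbar,
        show t (jj + (i + 1)) (γ (jj + i)) = γ (jj + (i + 1)) from (hγs (jj + i)).symm,
        qcast_mk]
      exact congrArg _ (hrγ (jj + (i + 1)) ((jj + 1) + i) (by omega) _)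
  -- component 0 of tsc j κ vanishes for kernel elements
  have htsc0' : ∀ jj (κ : Tilt I F 0), κ.1 0 = 0 → (tsc jj κ).1 0 = 0 := by
    intro jj
    induction jj with
    | zero => intro κ h; rw [htsc0]; exact h
    | succ jj ih =>
      intro κ h
      rw [htscS jj, RingHom.comp_apply, hts jj (tsc jj κ) 0, ih κ h, map_zero, map_zero]
  -- the torsion bijections
  choose G hGbij hGspec using hFtor
  obtain ⟨Ginv, hGinv⟩ : ∃ Ginv : ∀ m, ↥(torSet (I m)) → ↥(torSet (I (m + 1))),
      ∀ m z, G m (Ginv m z) = z :=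
    ⟨fun m => (Equiv.ofBijective (G m) (hGbij m)).symm,
      fun m z => (Equiv.ofBijective (G m) (hGbij m)).apply_symm_apply z⟩
  -- key step: a torsion element whose class dies under F is zero
  have kstep : ∀ m (z : R (m + 1)), z ∈ torSet (I (m + 1)) →
      F m (Ideal.Quotient.mk (I (m + 1)) z) = 0 → z = 0 := by
    intro m z hz h0
    have hz0 : (0 : R (m + 1)) ∈ torSet (I (m + 1)) := torSet_zero _
    have e1 : ((G m ⟨z, hz⟩ : R m)) = 0 := by
      apply tor_inter (hprinI m) (htorz m) (G m ⟨z, hz⟩).2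
      rw [← Ideal.Quotient.eq_zero_iff_mem, hGspec m ⟨z, hz⟩]
      exact h0
    have e2 : ((G m ⟨0, hz0⟩ : R m)) = 0 := by
      apply tor_inter (hprinI m) (htorz m) (G m ⟨0, hz0⟩).2
      rw [← Ideal.Quotient.eq_zero_iff_mem, hGspec m ⟨0, hz0⟩]
      show F m (Ideal.Quotient.mk _ (0 : R (m + 1))) = 0
      rw [map_zero, map_zero]
    have := (hGbij m).injective (Subtype.ext (e1.trans e2.symm))
    exact congrArg Subtype.val this
  -- the chain of torsion lifts going up the tower
  obtain ⟨ych, hych0, hychs⟩ : ∃ ych : ∀ (j : ℕ) (y : ↥(torSet (I j))) (i : ℕ), ↥(torSet (I (j + i))),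
      (∀ j y, ych j y 0 = y) ∧ (∀ j y i, ych j y (i + 1) = Ginv (j + i) (ych j y i)) :=
    ⟨fun j y i => Nat.rec (motive := fun i => ↥(torSet (I (j + i)))) y (fun i z => Ginv (j + i) z) i,
      fun _ _ => rfl, fun _ _ _ => rfl⟩
  have hychF : ∀ j y i, F (j + i) (Ideal.Quotient.mk (I (j + (i + 1))) ((ych j y (i + 1)) : R (j + (i + 1))))
      = Ideal.Quotient.mk (I (j + i)) ((ych j y i) : R (j + i)) := by
    intro j y i
    have h := hGspec (j + i) (Ginv (j + i) (ych j y i))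
    rw [hGinv] at h
    rw [hychs j y i]
    exact h.symm
  -- φ : torsion elements of R_j give torsion elements of the tilt
  obtain ⟨phiT, hphiT⟩ : ∃ phiT : ∀ (j : ℕ) (y : ↥(torSet (I j))), Tilt I F j,
      ∀ j y i, (phiT j y).1 i = Ideal.Quotient.mk (I (j + i)) ((ych j y i) : R (j + i)) :=
    ⟨fun j y => ⟨fun i => Ideal.Quotient.mk (I (j + i)) ((ych j y i) : R (j + i)),
      fun i => hychF j y i⟩, fun _ _ _ => rfl⟩
  -- L3 : elements of the mapped kernel ideal annihilate phiT
  have hann : ∀ (j : ℕ) (y : ↥(torSet (I j))) (a : Tilt I F j),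
      a ∈ (RingHom.ker (proj I F 0 0)).map (tsc j) → a * phiT j y = 0 := by
    intro j y
    let Ann : Ideal (Tilt I F j) :=
      { carrier := {a | a * phiT j y = 0}
        zero_mem' := by show (0 : Tilt I F j) * phiT j y = 0; rw [zero_mul]
        add_mem' := by
          intro a b ha hb
          show (a + b) * phiT j y = 0
          rw [add_mul, ha, hb, add_zero]
        smul_mem' := by
          intro c a ha
          show (c * a) * phiT j y = 0
          rw [mul_assoc, ha, mul_zero] }
    have hle : (RingHom.ker (proj I F 0 0)).map (tsc j) ≤ Ann := by
      refine Ideal.map_le_iff_le_comap.mpr ?_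
      intro κ hκ
      have hκ0 : κ.1 0 = 0 := RingHom.mem_ker.mp hκ
      show tsc j κ * phiT j y = 0
      have key : ∀ i, (tsc j κ).1 i * (phiT j y).1 i = 0 := by
        intro i
        induction i with
        | zero => rw [htsc0' j κ hκ0, zero_mul]
        | succ i ih =>
          obtain ⟨c, hc⟩ := Ideal.Quotient.mk_surjective ((tsc j κ).1 (i + 1))
          have hztor : c * ((ych j y (i + 1)) : R (j + (i + 1))) ∈ torSet (I (j + (i + 1))) :=
            torSet_mul (ych j y (i + 1)).2 c
          have hFz : F (j + i) (Ideal.Quotient.mk (I (j + (i + 1)))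
              (c * ((ych j y (i + 1)) : R (j + (i + 1))))) = 0 := by
            have h1 : Ideal.Quotient.mk (I (j + (i + 1))) (c * ((ych j y (i + 1)) : R (j + (i + 1))))
                = (tsc j κ).1 (i + 1) * (phiT j y).1 (i + 1) := by
              rw [map_mul, hc, hphiT j y (i + 1)]
            rw [h1, map_mul, (tsc j κ).2 i, (phiT j y).2 i, ih]
          have hzz := kstep (j + i) _ hztor hFz
          have h2 : (tsc j κ).1 (i + 1) * (phiT j y).1 (i + 1) = 0 := by
            rw [← hc, hphiT j y (i + 1), ← map_mul, hzz, map_zero]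
          exact h2
      apply Subtype.ext
      funext i
      exact key i
    intro a ha
    exact hle ha
  have hphiTor : ∀ (j : ℕ) (y : ↥(torSet (I j))),
      phiT j y ∈ torSet ((RingHom.ker (proj I F 0 0)).map (tsc j)) :=
    fun j y a ha => ⟨1, one_pos, by rw [pow_one]; exact hann j y a ha⟩
  -- t preserves torsion
  have t_tor : ∀ (jj : ℕ) (z : R jj), z ∈ torSet (I jj) → t jj z ∈ torSet (I (jj + 1)) := by
    intro jj z hz
    let Ann : Ideal (R (jj + 1)) :=
      { carrier := {a | a * t jj z = 0}
        zero_mem' := by show (0 : R (jj + 1)) * t jj z = 0; rw [zero_mul]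
        add_mem' := by
          intro a b ha hb
          show (a + b) * t jj z = 0
          rw [add_mul, ha, hb, add_zero]
        smul_mem' := by
          intro c a ha
          show (c * a) * t jj z = 0
          rw [mul_assoc, ha, mul_zero] }
    have hle : I (jj + 1) ≤ Ann := by
      rw [hIsucc jj]
      refine Ideal.map_le_iff_le_comap.mpr ?_
      intro b hb
      show t jj b * t jj z = 0
      rw [← map_mul, htorz jj b hb z hz, map_zero]
    intro a ha
    exact ⟨1, one_pos, by rw [pow_one]; exact hle ha⟩
  -- sElemT lies in the kernel of the projection
  have hsk : sElemT ∈ RingHom.ker (proj I F 0 0) := by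
    rw [RingHom.mem_ker]
    show sf 0 = 0
    exact hsf0
  -- L2: every component of a torsion element of the tilt admits a torsion lift
  have PL : ∀ (j : ℕ) (x : Tilt I F j), x ∈ torSet ((RingHom.ker (proj I F 0 0)).map (tsc j)) →
      ∀ i, ∃ y : R (j + i), y ∈ torSet (I (j + i)) ∧ Ideal.Quotient.mk (I (j + i)) y = x.1 i := by
    intro j x hx
    have hsj : tsc j sElemT ∈ (RingHom.ker (proj I F 0 0)).map (tsc j) :=
      Ideal.mem_map_of_mem _ hsk
    obtain ⟨n, hn, hnx⟩ := hx _ hsj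
    have claimA : ∀ i, n ≤ p ^ i →
        Ideal.Quotient.mk (I (j + (i + 1))) (γ (j + i)) * x.1 (i + 1) = 0 := by
      intro i hle
      have hcomp : ((tsc j sElemT).1 (i + 1)) ^ n * x.1 (i + 1) = 0 := by
        have h0 := congrArg (fun z : Tilt I F j => z.1 (i + 1)) hnx
        simpa using h0
      rw [← hspow j i]
      have hsplit : ((tsc j sElemT).1 (i + 1)) ^ p ^ i
          = ((tsc j sElemT).1 (i + 1)) ^ (p ^ i - n) * ((tsc j sElemT).1 (i + 1)) ^ n := by
        rw [← pow_add, Nat.sub_add_cancel hle]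
      rw [hsplit, mul_assoc, hcomp, mul_zero]
    have claimB : ∀ i, Ideal.Quotient.mk (I (j + (i + 1))) (γ (j + i)) * x.1 (i + 1) = 0 →
        ∃ y : R (j + i), y ∈ torSet (I (j + i)) ∧ Ideal.Quotient.mk (I (j + i)) y = x.1 i := by
      intro i hA
      obtain ⟨X, hX⟩ : ∃ X : R ((j + i) + 1) ⧸ I ((j + i) + 1), X = x.1 (i + 1) :=
        ⟨x.1 (i + 1), rfl⟩
      have hA' : Ideal.Quotient.mk (I ((j + i) + 1)) (γ (j + i)) * X = 0 := by
        rw [hX]; exact hA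
      obtain ⟨c, hc⟩ : ∃ c : R ((j + i) + 1),
          Ideal.Quotient.mk (I ((j + i) + 1)) c = X :=
        Ideal.Quotient.mk_surjective X
      have hmem : γ (j + i) * c ∈ I ((j + i) + 1) := by
        have h1 : Ideal.Quotient.mk (I ((j + i) + 1)) (γ (j + i) * c) = 0 := by
          rw [map_mul, hc]; exact hA'
        exact Ideal.Quotient.eq_zero_iff_mem.mp h1
      rw [hIγ (j + i)] at hmem
      obtain ⟨d, hd⟩ := Ideal.mem_span_singleton'.mp hmem
      have egg : γ (j + i) * γ (j + i) ^ (p - 1) = γ (j + i) ^ p := by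
        rw [← pow_succ', Nat.sub_add_cancel hp.one_le]
      have hγc' : γ (j + i) * (c - γ (j + i) ^ (p - 1) * d) = 0 := by
        rw [mul_sub, ← mul_assoc, egg, ← hd]
        ring
      have hc'tor : c - γ (j + i) ^ (p - 1) * d ∈ torSet (I ((j + i) + 1)) := by
        intro a ha
        rw [hIγ (j + i)] at ha
        obtain ⟨e, he⟩ := Ideal.mem_span_singleton'.mp ha
        refine ⟨1, one_pos, ?_⟩
        rw [pow_one, ← he, ← egg]
        calc e * (γ (j + i) * γ (j + i) ^ (p - 1)) * (c - γ (j + i) ^ (p - 1) * d)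
            = e * γ (j + i) ^ (p - 1) * (γ (j + i) * (c - γ (j + i) ^ (p - 1) * d)) := by ring
          _ = 0 := by rw [hγc', mul_zero]
      have hFc' : F (j + i) (Ideal.Quotient.mk (I ((j + i) + 1)) (c - γ (j + i) ^ (p - 1) * d))
          = x.1 i := by
        rw [map_sub, map_mul, map_pow, hc]
        rw [map_sub, map_mul, map_pow, hFγ (j + i),
          zero_pow (Nat.sub_ne_zero_of_lt hp.one_lt), zero_mul, sub_zero, hX]
        exact x.2 i
      refine ⟨(G (j + i) ⟨_, hc'tor⟩ : R (j + i)), (G (j + i) ⟨_, hc'tor⟩).2, ?_⟩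
      rw [hGspec (j + i) ⟨_, hc'tor⟩]
      exact hFc'
    have kdown : ∀ i, (∃ y : R (j + (i + 1)), y ∈ torSet (I (j + (i + 1))) ∧
        Ideal.Quotient.mk (I (j + (i + 1))) y = x.1 (i + 1)) →
        ∃ y : R (j + i), y ∈ torSet (I (j + i)) ∧ Ideal.Quotient.mk (I (j + i)) y = x.1 i := by
      rintro i ⟨y, hyt, hym⟩
      refine ⟨(G (j + i) ⟨y, hyt⟩ : R (j + i)), (G (j + i) ⟨y, hyt⟩).2, ?_⟩
      rw [hGspec (j + i) ⟨y, hyt⟩]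
      show F (j + i) (Ideal.Quotient.mk (I (j + (i + 1))) y) = x.1 i
      rw [hym]
      exact x.2 i
    have down : ∀ d i, (∃ y : R (j + (i + d)), y ∈ torSet (I (j + (i + d))) ∧
        Ideal.Quotient.mk (I (j + (i + d))) y = x.1 (i + d)) →
        ∃ y : R (j + i), y ∈ torSet (I (j + i)) ∧ Ideal.Quotient.mk (I (j + i)) y = x.1 i := by
      intro d
      induction d with
      | zero => intro i h; exact h
      | succ d ih => intro i h; exact ih i (kdown (i + d) h)
    intro i
    have hle : n ≤ p ^ (i + n) :=
      le_trans (le_of_lt (Nat.lt_two_pow_self (n := n)))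
        (le_trans (Nat.pow_le_pow_left hp.two_le n)
          (Nat.pow_le_pow_right hp.one_le (Nat.le_add_left n i)))
    exact down n i (claimB (i + n) (claimA (i + n) hle))
  have PL' : ∀ (j : ℕ) (x : ↥(torSet ((RingHom.ker (proj I F 0 0)).map (tsc j)))) (i : ℕ),
      ∃ y : R (j + i), y ∈ torSet (I (j + i)) ∧ Ideal.Quotient.mk (I (j + i)) y = x.1.1 i :=
    fun j x i => PL j x.1 x.2 i
  choose ylift hytor hymk using PL'
  -- the bijection
  refine ⟨fun j x => ⟨ylift j x 0, hytor j x 0⟩, ?_, ?_, ?_, ?_⟩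
  · -- bijectivity
    intro j
    refine Function.bijective_iff_has_inverse.mpr ⟨fun y => ⟨phiT j y, hphiTor j y⟩, ?_, ?_⟩
    · -- left inverse : φ (ψ x) = x
      intro x
      have hchain : ∀ i, ((ych j ⟨ylift j x 0, hytor j x 0⟩ i) : R (j + i)) = ylift j x i := by
        intro i
        induction i with
        | zero => rw [hych0]
        | succ i ih =>
          have h1 : G (j + i) (ych j ⟨ylift j x 0, hytor j x 0⟩ (i + 1))
              = ⟨ylift j x i, hytor j x i⟩ := by
            rw [hychs, hGinv]
            exact Subtype.ext ih
          have h2 : G (j + i) ⟨ylift j x (i + 1), hytor j x (i + 1)⟩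
              = ⟨ylift j x i, hytor j x i⟩ := by
            apply Subtype.ext
            apply uniq (j + i) (G (j + i) ⟨ylift j x (i + 1), hytor j x (i + 1)⟩).2 (hytor j x i)
            rw [hGspec]
            show F (j + i) (Ideal.Quotient.mk (I (j + (i + 1))) (ylift j x (i + 1)))
                = Ideal.Quotient.mk (I (j + i)) (ylift j x i)
            rw [hymk j x (i + 1), hymk j x i]
            exact x.1.2 i
          have h3 := (hGbij (j + i)).injective (h1.trans h2.symm)
          exact congrArg Subtype.val h3
      apply Subtype.ext
      apply Subtype.ext
      funext i
      show (phiT j ⟨ylift j x 0, hytor j x 0⟩).1 i = x.1.1 i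
      rw [hphiT, hchain i, hymk j x i]
    · -- right inverse : ψ (φ y) = y
      intro y
      apply Subtype.ext
      show ylift j ⟨phiT j y, hphiTor j y⟩ 0 = y.1
      apply uniq (j + 0) (hytor j ⟨phiT j y, hphiTor j y⟩ 0) y.2
      rw [hymk j ⟨phiT j y, hphiTor j y⟩ 0]
      show (phiT j y).1 0 = Ideal.Quotient.mk (I (j + 0)) y.1
      rw [hphiT j y 0]
      exact congrArg _ (congrArg Subtype.val (hych0 j y))
  · -- additivity
    intro j x y h
    apply uniq (j + 0) (hytor j ⟨(x : Tilt I F j) + (y : Tilt I F j), h⟩ 0)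
      (torSet_add (htorz (j + 0)) (hytor j x 0) (hytor j y 0))
    rw [map_add, hymk j x 0, hymk j y 0, hymk j ⟨(x : Tilt I F j) + (y : Tilt I F j), h⟩ 0]
    rfl
  · -- multiplicativity
    intro j x y h
    apply uniq (j + 0) (hytor j ⟨(x : Tilt I F j) * (y : Tilt I F j), h⟩ 0)
      (torSet_mul (hytor j y 0) (ylift j x 0))
    rw [map_mul, hymk j x 0, hymk j y 0, hymk j ⟨(x : Tilt I F j) * (y : Tilt I F j), h⟩ 0]
    rfl
  · -- compatibility with the transition maps
    intro j x h
    apply uniq (j + 1) (hytor (j + 1) ⟨ts j (x : Tilt I F j), h⟩ 0)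
      (t_tor j (ylift j x 0) (hytor j x 0))
    calc Ideal.Quotient.mk (I (j + 1)) (ylift (j + 1) ⟨ts j (x : Tilt I F j), h⟩ 0)
        = (ts j (x : Tilt I F j)).1 0 := hymk (j + 1) ⟨ts j (x : Tilt I F j), h⟩ 0
      _ = qcast I (by omega : (j + 0) + 1 = (j + 1) + 0) (tbar (j + 0) ((x : Tilt I F j).1 0)) :=
          hts j (x : Tilt I F j) 0
      _ = tbar j ((x : Tilt I F j).1 0) := rfl
      _ = tbar j (Ideal.Quotient.mk (I j) (ylift j x 0)) := by
          rw [show Ideal.Quotient.mk (I j) (ylift j x 0) = (x : Tilt I F j).1 0 from hymk j x 0]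
      _ = Ideal.Quotient.mk (I (j + 1)) (t j (ylift j x 0)) := htbar j (ylift j x 0)

end PaperTower
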